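/- arXiv:1501.03113 — 2 statements merged into one kernel-verified Lean document; each statement's English description precedes it below -/
import Mathlib

section
/- If (a_n) is a strictly increasing sequence of natural numbers, all greater than 1 and pairwise relatively prime, and the series ∑ 1/a_n diverges, then infinitely many terms a_n are prime. -/
/-! If only finitely many `a n` were prime, then for all but finitely many `n` the smallest
prime factor `p n` of the composite `a n` satisfies `p n ^ 2 ≤ a n`. Pairwise coprimality makes
`n ↦ p n` injective, so `∑ 1 / a n` is dominated, up to finitely many terms, by a subseries of
`∑ 1 / p ^ 2`, which converges. -/

namespace Nat

theorem minFac_injective_of_pairwise_coprime {ι : Type*} {f : ι → ℕ} (hf : ∀ i, f i ≠ 1)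
    (hcop : Pairwise (Function.onFun Coprime f)) : Function.Injective (fun i => (f i).minFac) := by
  intro i j (hij : (f i).minFac = (f j).minFac)
  by_contra hne
  have hminFac_eq_one : (f i).minFac = 1 :=
    eq_one_of_dvd_coprimes (hcop hne) (minFac_dvd _) (hij ▸ minFac_dvd _)
  exact (minFac_prime (hf i)).ne_one hminFac_eq_one

theorem one_div_le_one_div_minFac_sq {n : ℕ} (hn : ¬ n.Prime) :
    (1 : ℝ) / n ≤ 1 / (n.minFac : ℝ) ^ 2 := by
  rcases eq_zero_or_pos n with rfl | hpos
  · simp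
  have hle : (n.minFac : ℝ) ^ 2 ≤ n := by exact_mod_cast minFac_sq_le_self hpos hn
  have hp : (0 : ℝ) < n.minFac := by exact_mod_cast minFac_pos n
  exact one_div_le_one_div_of_le (pow_pos hp 2) hle

theorem summable_one_div_of_pairwise_coprime_of_finite_primes {ι : Type*} {f : ι → ℕ}
    (hf : ∀ i, f i ≠ 1) (hcop : Pairwise (Function.onFun Coprime f))
    (hprime : {i | (f i).Prime}.Finite) :
    Summable (fun i => (1 : ℝ) / f i) := by
  have hsq : Summable (fun i => (1 : ℝ) / ((f i).minFac : ℝ) ^ 2) :=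
    (Real.summable_one_div_nat_pow.2 one_lt_two).comp_injective
      (minFac_injective_of_pairwise_coprime hf hcop)
  refine hsq.of_norm_bounded_eventually ?_
  filter_upwards [hprime.compl_mem_cofinite] with i hi
  rw [Real.norm_of_nonneg (by positivity)]
  exact one_div_le_one_div_minFac_sq hi

end Nat

theorem stmt_2_general (a : ℕ → ℕ) (h1 : ∀ n, 1 < a n)
    (hcop : ∀ m n, m ≠ n → Nat.Coprime (a m) (a n))
    (hdiv : ¬ Summable (fun n => (1 : ℝ) / a n)) :
    {n | (a n).Prime}.Infinite :=
  fun hfin => hdiv <|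
    Nat.summable_one_div_of_pairwise_coprime_of_finite_primes (fun n => (h1 n).ne')
      (fun m n => hcop m n) hfin

theorem stmt_2 (a : ℕ → ℕ) (hmono : StrictMono a) (h1 : ∀ n, 1 < a n)
    (hcop : ∀ m n, m ≠ n → Nat.Coprime (a m) (a n))
    (hdiv : ¬ Summable (fun n => (1 : ℝ) / a n)) :
    {n | (a n).Prime}.Infinite :=
  stmt_2_general a h1 hcop hdiv
end

section
/- Assuming the bound π(x) < (x/ln x)(1 + 3/(2 ln x)) for all real x > 1: any collection of pairwise relatively prime natural numbers, each greater than 1 and not exceeding n, with at least (2√n / ln n)(1 + 3/ln n) + 1 elements, contains at least one prime. -/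
/-!
The smallest prime factor of a composite `m ≤ n` is at most `√n`, and pairwise coprime numbers
have distinct smallest prime factors. So a pairwise coprime family of composites below `n` has at
most `π(√n)` members, and the Rosser–Schoenfeld bound at `√n` is exactly the threshold on `k`.
-/

open Function

namespace Nat

theorem minFac_injective_of_pairwise_coprime_s9 {ι : Type*} {a : ι → ℕ} (h1 : ∀ i, a i ≠ 1)
    (hcop : Pairwise (Coprime on a)) : Injective fun i ↦ (a i).minFac := by
  intro i j (hij : (a i).minFac = (a j).minFac)
  by_contra hne
  have hdvd : (a i).minFac ∣ Nat.gcd (a i) (a j) :=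
    Nat.dvd_gcd (minFac_dvd _) (hij ▸ minFac_dvd (a j))
  rw [hcop hne] at hdvd
  exact (minFac_prime (h1 i)).ne_one (eq_one_of_dvd_one hdvd)

theorem minFac_mem_primesLE_sqrt {m n : ℕ} (hm : 1 < m) (hprime : ¬m.Prime) (hmn : m ≤ n) :
    m.minFac ∈ primesLE (sqrt n) := by
  refine mem_primesLE.mpr ⟨?_, minFac_prime hm.ne'⟩
  rw [le_sqrt']
  exact (minFac_sq_le_self (by omega) hprime).trans hmn

theorem card_le_primeCounting_sqrt_of_pairwise_coprime {ι : Type*} [Fintype ι] {a : ι → ℕ}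
    {n : ℕ} (h1 : ∀ i, 1 < a i) (hprime : ∀ i, ¬(a i).Prime) (hle : ∀ i, a i ≤ n)
    (hcop : Pairwise (Coprime on a)) : Fintype.card ι ≤ primeCounting (sqrt n) := by
  rw [← primesLE_card_eq_primeCounting, ← Finset.card_univ]
  exact Finset.card_le_card_of_injOn _
    (fun i _ ↦ minFac_mem_primesLE_sqrt (h1 i) (hprime i) (hle i))
    (minFac_injective_of_pairwise_coprime_s9 (fun i ↦ (h1 i).ne') hcop).injOn

end Nat

open Real

theorem primeCounting_floor_sqrt_lt
    (hRS : ∀ x : ℝ, 1 < x →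
      (Nat.primeCounting ⌊x⌋₊ : ℝ) < x / Real.log x * (1 + 3 / (2 * Real.log x)))
    {x : ℝ} (hx : 1 < x) :
    (Nat.primeCounting ⌊√x⌋₊ : ℝ) < 2 * √x / log x * (1 + 3 / log x) := by
  have hlog : 0 < log x := log_pos hx
  have hRS_sqrt := hRS (√x) (by simpa using sqrt_lt_sqrt zero_le_one hx)
  rw [log_sqrt (by positivity)] at hRS_sqrt
  convert hRS_sqrt using 1
  field_simp

theorem stmt_9
    (hRS : ∀ x : ℝ, 1 < x →
      (Nat.primeCounting ⌊x⌋₊ : ℝ) < x / Real.log x * (1 + 3 / (2 * Real.log x)))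
    (k n : ℕ) (a : Fin k → ℕ) (h1 : ∀ i, 1 < a i) (hle : ∀ i, a i ≤ n)
    (hcop : ∀ i j, i ≠ j → Nat.Coprime (a i) (a j))
    (hk : 2 * Real.sqrt n / Real.log n * (1 + 3 / Real.log n) + 1 ≤ (k : ℝ)) :
    ∃ i, (a i).Prime := by
  by_contra! hprime
  have hk_pos : 0 < k := by
    have : (0 : ℝ) ≤ 2 * √n / log n * (1 + 3 / log n) := by positivity
    exact_mod_cast (by linarith : (0 : ℝ) < k)
  have hn : (1 : ℝ) < n := by exact_mod_cast (h1 ⟨0, hk_pos⟩).trans_le (hle ⟨0, hk_pos⟩)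
  have hcard : (k : ℝ) ≤ Nat.primeCounting (Nat.sqrt n) := by
    have := Nat.card_le_primeCounting_sqrt_of_pairwise_coprime h1 hprime hle hcop
    rw [Fintype.card_fin] at this
    exact_mod_cast this
  have hRS_sqrt := primeCounting_floor_sqrt_lt hRS hn
  rw [nat_floor_real_sqrt_eq_nat_sqrt] at hRS_sqrt
  linarith
end
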